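/- Let κ ≥ 1 be a real number, f the filter function associated to κ, and let A be an N×N positive semidefinite complex matrix with ‖A‖ ≤ 1 and rank(A) ≤ r. With spectral decomposition A = Σ_j λ_j |u_j⟩⟨u_j|, one has |Σ_j λ_j f(λ_j)² − (1/(4√κ))·tr(√A)| ≤ r/(4κ); equivalently, the trace of the matrix obtained by applying g(λ) = λ·f(λ)² to A differs from (1/(4√κ))·tr(√A) by at most r/(4κ). -/

import Mathlib

/-!
Since `‖A‖ ≤ 1`, every eigenvalue `λ` lies in `[0, 1]`. For `λ ≥ 1/κ` the filter is
`f(λ) = ½ (κλ)^(-1/4)`, so `λ f(λ)² = √λ / (4√κ)` exactly. For `λ < 1/κ` both `λ f(λ)²` and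
`√λ / (4√κ)` lie in `[0, 1/(4κ)]`, because `f² ≤ 1/4` there. Zero eigenvalues contribute nothing
and at most `rank A ≤ r` eigenvalues are nonzero.
-/

open Real Matrix
open scoped Matrix.Norms.L2Operator ComplexOrder

/-- The square root of a positive semidefinite matrix, as `Matrix.PosSemidef.sqrt` was defined
in the older Mathlib (removed since). -/
noncomputable def Matrix.PosSemidef.sqrt {n 𝕜 : Type*} [Fintype n] [DecidableEq n] [RCLike 𝕜]
    {A : Matrix n n 𝕜} (hA : A.PosSemidef) : Matrix n n 𝕜 :=
  (hA.1.eigenvectorUnitary : Matrix n n 𝕜) *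
    diagonal (((↑) : ℝ → 𝕜) ∘ (√·) ∘ hA.1.eigenvalues) *
    (star hA.1.eigenvectorUnitary : Matrix n n 𝕜)

/-- The filter function associated to the parameter `κ`. -/
noncomputable def filterFun (κ : ℝ) : ℝ → ℝ := fun l =>
  if 1 < l then (1/2) * κ ^ (-(1/4 : ℝ))
  else if 1/κ ≤ l then (1/2) * κ ^ (-(1/4 : ℝ)) * l ^ (-(1/4 : ℝ))
  else if 1/(2*κ) ≤ l then (1/2) * Real.sin ((π/2) * ((l - 1/(2*κ)) / (1/κ - 1/(2*κ))))
  else 0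

namespace Matrix

variable {n 𝕜 : Type*} [Fintype n] [DecidableEq n] [RCLike 𝕜] {A : Matrix n n 𝕜}

lemma IsHermitian.abs_eigenvalues_le_norm (hA : A.IsHermitian) (i : n) :
    |hA.eigenvalues i| ≤ ‖A‖ := by
  have : Nonempty n := ⟨i⟩
  have : NormOneClass (Matrix n n 𝕜) := ⟨CStarRing.norm_one⟩
  simpa using spectrum.norm_le_norm_of_mem
    (spectrum.algebraMap_mem 𝕜 (hA.eigenvalues_mem_spectrum_real i))

lemma IsHermitian.abs_sum_le_rank_mul (hA : A.IsHermitian) {g : ℝ → ℝ} {c : ℝ}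
    (hg0 : g 0 = 0) (hgc : ∀ i, |g (hA.eigenvalues i)| ≤ c) :
    |∑ i, g (hA.eigenvalues i)| ≤ A.rank * c := by
  classical
  rw [hA.rank_eq_card_non_zero_eigs, Fintype.card_subtype,
    ← Finset.sum_filter_of_ne (p := fun i ↦ hA.eigenvalues i ≠ 0)]
  · grw [Finset.abs_sum_le_sum_abs, Finset.sum_le_card_nsmul _ _ c fun i _ ↦ hgc i,
      nsmul_eq_mul]
  · rintro i - hi h
    simp [h, hg0] at hi

lemma PosSemidef.re_trace_sqrt (hA : A.PosSemidef) :
    RCLike.re hA.sqrt.trace = ∑ i, √(hA.1.eigenvalues i) := by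
  rw [PosSemidef.sqrt, trace_mul_cycle,
    Unitary.star_mul_self_of_mem hA.1.eigenvectorUnitary.2, one_mul, trace_diagonal, map_sum]
  simp

end Matrix

lemma Real.sq_rpow_neg_quarter {x : ℝ} (hx : 0 ≤ x) : (x ^ (-(1/4 : ℝ))) ^ 2 = (√x)⁻¹ := by
  rw [← Real.rpow_natCast, ← Real.rpow_mul hx, Real.sqrt_eq_rpow, ← Real.rpow_neg hx]
  norm_num

section filterFun

variable {κ l : ℝ}

lemma filterFun_sq_le_of_lt (hκ : 1 ≤ κ) (hl : l < 1/κ) : filterFun κ l ^ 2 ≤ 1/4 := by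
  have hl1 : ¬ 1 < l := fun h ↦ by linarith [(div_le_one (by positivity)).mpr hκ]
  rw [filterFun, if_neg hl1, if_neg hl.not_ge]
  split_ifs
  · nlinarith [Real.sin_sq_le_one ((π/2) * ((l - 1/(2*κ)) / (1/κ - 1/(2*κ))))]
  · norm_num

lemma mul_filterFun_sq_of_le (hκ : 0 < κ) (hl : 1/κ ≤ l) (hl1 : l ≤ 1) :
    l * filterFun κ l ^ 2 = 1/(4 * √κ) * √l := by
  have hl0 : 0 ≤ l := le_trans (by positivity) hl
  rw [filterFun, if_neg hl1.not_gt, if_pos hl, mul_pow, mul_pow,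
    Real.sq_rpow_neg_quarter hκ.le, Real.sq_rpow_neg_quarter hl0]
  linear_combination (1/(4 * √κ)) * Real.div_sqrt (x := l)

lemma abs_mul_filterFun_sq_sub_le (hκ : 1 ≤ κ) (hl0 : 0 ≤ l) (hl1 : l ≤ 1) :
    |l * filterFun κ l ^ 2 - 1/(4 * √κ) * √l| ≤ 1/(4 * κ) := by
  have hκ0 : 0 < κ := by linarith
  rcases le_or_gt (1/κ) l with hl | hl
  · rw [mul_filterFun_sq_of_le hκ0 hl hl1, sub_self, abs_zero]
    positivity
  refine abs_sub_le_of_nonneg_of_le (by positivity) ?_ (by positivity) ?_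
  · calc l * filterFun κ l ^ 2 ≤ 1/κ * (1/4) := by
          gcongr
          exact filterFun_sq_le_of_lt hκ hl
      _ = 1/(4 * κ) := by ring
  · calc 1/(4 * √κ) * √l ≤ 1/(4 * √κ) * √(1/κ) := by gcongr
      _ = 1/(4 * κ) := by
          rw [one_div κ, Real.sqrt_inv]
          field_simp
          rw [Real.sq_sqrt hκ0.le]

end filterFun

theorem stmt2 {N : ℕ} (κ : ℝ) (hκ : 1 ≤ κ) (r : ℕ)
    (A : Matrix (Fin N) (Fin N) ℂ) (hA : A.PosSemidef) (hAnorm : ‖A‖ ≤ 1)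
    (hrank : A.rank ≤ r) :
    |(∑ j, hA.1.eigenvalues j * (filterFun κ (hA.1.eigenvalues j))^2)
      - (1 / (4 * Real.sqrt κ)) * (hA.sqrt.trace).re| ≤ r / (4*κ) := by
  have heig_le_one (j : Fin N) : hA.1.eigenvalues j ≤ 1 :=
    (le_abs_self _).trans ((hA.1.abs_eigenvalues_le_norm j).trans hAnorm)
  rw [show hA.sqrt.trace.re = _ from hA.re_trace_sqrt, Finset.mul_sum, ← Finset.sum_sub_distrib]
  calc _ ≤ A.rank * (1 / (4 * κ)) :=
        hA.1.abs_sum_le_rank_mul (g := fun l ↦ l * filterFun κ l ^ 2 - 1/(4 * √κ) * √l)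
          (by simp) fun j ↦
          abs_mul_filterFun_sq_sub_le hκ (hA.eigenvalues_nonneg j) (heig_le_one j)
    _ ≤ r * (1 / (4 * κ)) := by gcongr
    _ = r / (4 * κ) := by ring
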